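/- arXiv:1810.02226 — 2 statements merged into one kernel-verified Lean document; each statement's English description precedes it below -/
import Mathlib

section
/- For every positive integer n and every complex number z, Σ_{λ⊢n} Π_{h∈H(λ)^⋄} (h+z)/h = Σ_{λ⊢n} Π_{j=1}^{n} C(k_j(λ)+z, k_j(λ)) = Σ_{λ⊢n} (−1)^{ℓ(λ)} Π_{j=1}^{n} C(−z−1, k_j(λ)), where k_j(λ) is the number of parts of λ equal to j, ℓ(λ) is the number of parts of λ, and C(w,k) := w(w−1)⋯(w−k+1)/k! is the generalized binomial coefficient for w ∈ ℂ and k ∈ ℕ. -/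
open Finset Polynomial

/-- Length of column `j` (0-indexed) of the Young diagram of `μ`,
i.e. the number of parts of `μ` that are at least `j+1`. -/
def colLen {n : ℕ} (μ : Nat.Partition n) (j : ℕ) : ℕ :=
  (μ.parts.filter (fun p => j + 1 ≤ p)).card

/-- Length of row `i` (0-indexed) of the Young diagram of `μ`; this is the
`(i+1)`-st largest part of `μ` (or `0` if there is no such part). -/
def rowLen {n : ℕ} (μ : Nat.Partition n) (i : ℕ) : ℕ :=
  ((Finset.range n).filter (fun j => i < colLen μ j)).card

/-- The cells (0-indexed, `(row, column)`) of the Young diagram of `μ`. -/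
def cells {n : ℕ} (μ : Nat.Partition n) : Finset (ℕ × ℕ) :=
  (Finset.range n ×ˢ Finset.range n).filter (fun c => c.1 < colLen μ c.2)

/-- The arm length of a cell: the number of cells strictly to its right in its row. -/
def armLen {n : ℕ} (μ : Nat.Partition n) (c : ℕ × ℕ) : ℕ := rowLen μ c.1 - (c.2 + 1)

/-- The leg length of a cell: the number of cells strictly below it in its column. -/
def legLen {n : ℕ} (μ : Nat.Partition n) (c : ℕ × ℕ) : ℕ := colLen μ c.2 - (c.1 + 1)

/-- The hook length of a cell: `arm + leg + 1`. -/
def hookLen {n : ℕ} (μ : Nat.Partition n) (c : ℕ × ℕ) : ℕ := armLen μ c + legLen μ c + 1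

/-- `H(μ)`: the multiset of all hook lengths of `μ`. -/
def hooks {n : ℕ} (μ : Nat.Partition n) : Multiset ℕ := (cells μ).val.map (hookLen μ)

/-- `H(μ)^⋄`: the multiset of hook lengths of the cells of `μ` with trivial leg. -/
def hooksDia {n : ℕ} (μ : Nat.Partition n) : Multiset ℕ :=
  (((cells μ).filter (fun c => legLen μ c = 0)).val).map (hookLen μ)

/-- `H(μ)^⋄⋄`: the multiset of hook lengths of the cells of `μ` with trivial arm. -/
def hooksDiaDia {n : ℕ} (μ : Nat.Partition n) : Multiset ℕ :=
  (((cells μ).filter (fun c => armLen μ c = 0)).val).map (hookLen μ)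

/-- The generalized binomial coefficient `C(w, k) = w(w-1)⋯(w-k+1)/k!`
for `w ∈ ℂ` and `k ∈ ℕ`. -/
noncomputable def cbinom (w : ℂ) (k : ℕ) : ℂ :=
  (∏ i ∈ Finset.range k, (w - (i : ℂ))) / (k.factorial : ℂ)

/-!
A cell has trivial leg exactly when it is the bottom cell of its column. In row `i` (counted
from 0) these cells are the columns `λ_{i+2} ≤ j < λ_{i+1}`, with hook lengths `λ_{i+1} - j`,
i.e. `1, …, m` for `m = λ_{i+1} - λ_{i+2}`; so the row contributes
`∏_{t=1}^m (t + z)/t = C(m + z, m)`. Since `m` is the multiplicity of `i + 1` as a part of the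
conjugate partition `λ'`, reindexing the sum by the involution `λ ↦ λ'` gives the first identity.
The second is the reflection `C(k + z, k) = (-1)^k C(-z - 1, k)` together with
`∑_j k_j(λ) = ℓ(λ)`.
-/

theorem prod_Ico_apply_sub {M : Type*} [CommMonoid M] (f : ℕ → M) (a b : ℕ) :
    ∏ j ∈ Ico a b, f (b - j) = ∏ t ∈ range (b - a), f (t + 1) := by
  rw [prod_Ico_eq_prod_range, ← prod_range_reflect]
  exact prod_congr rfl fun t ht => congrArg f (by rw [mem_range] at ht; omega)

theorem prod_Icc_one_eq_prod_range {M : Type*} [CommMonoid M] (g : ℕ → M) (k : ℕ) :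
    ∏ j ∈ Icc 1 k, g j = ∏ i ∈ range k, g (i + 1) := by
  induction k with
  | zero => simp
  | succ k ih => rw [prod_Icc_succ_top (by omega), ih, prod_range_succ]

theorem sum_range_card_filter_succ_le {n : ℕ} (s : Multiset ℕ) (hs : ∀ p ∈ s, p ≤ n) :
    ∑ j ∈ range n, (s.filter (fun p => j + 1 ≤ p)).card = s.sum := by
  induction s using Multiset.induction with
  | empty => simp
  | cons a s ih =>
    have ha : (range n).filter (fun j => j + 1 ≤ a) = range a := by
      ext j
      have := hs a (Multiset.mem_cons_self a s)
      simp only [mem_filter, mem_range]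
      omega
    simp only [Multiset.filter_cons, Multiset.card_add, sum_add_distrib, Multiset.sum_cons,
      ih fun p hp => hs p (Multiset.mem_cons_of_mem hp), apply_ite Multiset.card,
      Multiset.card_singleton, Multiset.card_zero, sum_boole, ha, card_range, Nat.cast_id]

theorem prod_range_natCast_add_sub {R : Type*} [CommRing R] (k : ℕ) (z : R) :
    ∏ i ∈ range k, ((k : R) + z - i) = ∏ i ∈ range k, (((i + 1 : ℕ) : R) + z) := by
  rw [← prod_range_reflect]
  refine prod_congr rfl fun i hi => ?_
  have hk : ((k - 1 - i : ℕ) : R) + (i + 1 : ℕ) = k := by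
    rw [← Nat.cast_add]
    exact congrArg _ (by rw [mem_range] at hi; omega)
  rw [← hk]
  ring

theorem cbinom_natCast_add_self (k : ℕ) (z : ℂ) :
    cbinom (k + z) k = ∏ t ∈ range k, (((t + 1 : ℕ) : ℂ) + z) / ((t + 1 : ℕ) : ℂ) := by
  rw [cbinom, prod_range_natCast_add_sub, prod_div_distrib, Nat.factorial_eq_prod_range_add_one,
    Nat.cast_prod]

theorem cbinom_natCast_add_self_eq_neg_one_pow_mul (k : ℕ) (z : ℂ) :
    cbinom (k + z) k = (-1) ^ k * cbinom (-z - 1) k := by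
  have hneg := prod_neg (s := range k) fun i => -z - 1 - (i : ℂ)
  rw [card_range] at hneg
  rw [cbinom, cbinom, ← mul_div_assoc, prod_range_natCast_add_sub, ← hneg]
  refine congrArg (· / _) (prod_congr rfl fun i _ => ?_)
  push_cast
  ring

section YoungDiagram

variable {n : ℕ} (μ : Nat.Partition n)

theorem colLen_antitone : Antitone (colLen μ) := fun _ _ h =>
  Multiset.card_le_card (Multiset.monotone_filter_right _ fun _ _ => by omega)

theorem colLen_le (j : ℕ) : colLen μ j ≤ n :=
  (Multiset.card_le_card (Multiset.filter_le _ _)).trans <| by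
    simpa [μ.parts_sum] using Multiset.card_nsmul_le_sum fun _ hx => μ.parts_pos hx

theorem colLen_eq_zero_of_le {j : ℕ} (h : n ≤ j) : colLen μ j = 0 :=
  Multiset.card_eq_zero.2 <| Multiset.filter_eq_nil.2 fun _ hp =>
    by have := Nat.Partition.le_of_mem_parts hp; omega

theorem rowLen_le (i : ℕ) : rowLen μ i ≤ n :=
  (card_filter_le _ _).trans (card_range n).le

theorem lt_rowLen_iff_lt_colLen {i j : ℕ} : j < rowLen μ i ↔ i < colLen μ j := by
  constructor
  · intro h
    by_contra! hc
    have : (range n).filter (fun j' => i < colLen μ j') ⊆ range j := fun j' hj' => by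
      simp only [mem_filter, mem_range] at hj' ⊢
      by_contra! hjj'
      exact absurd (hj'.2.trans_le (colLen_antitone μ hjj')) (by omega)
    exact absurd (card_le_card this) (by rw [card_range]; exact not_le.2 h)
  · intro h
    have hjn : j < n := by
      by_contra! hjn
      rw [colLen_eq_zero_of_le μ hjn] at h
      omega
    have : range (j + 1) ⊆ (range n).filter (fun j' => i < colLen μ j') := fun j' hj' => by
      simp only [mem_filter, mem_range] at hj' ⊢
      exact ⟨by omega, h.trans_le (colLen_antitone μ (by omega))⟩
    exact (card_range _).symm.trans_le (card_le_card this)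

theorem sum_colLen : ∑ j ∈ range n, colLen μ j = n := by
  have := sum_range_card_filter_succ_le μ.parts fun _ hp => Nat.Partition.le_of_mem_parts hp
  rwa [μ.parts_sum] at this

theorem count_parts_succ (i : ℕ) : μ.parts.count (i + 1) = colLen μ i - colLen μ (i + 1) := by
  have hsplit := Multiset.filter_add_filter (fun p => i + 1 = p) (fun p => i + 1 + 1 ≤ p) μ.parts
  have hor : μ.parts.filter (fun p => i + 1 = p ∨ i + 1 + 1 ≤ p) = μ.parts.filter (i + 1 ≤ ·) :=
    Multiset.filter_congr fun p _ => by omega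
  have hand : μ.parts.filter (fun p => i + 1 = p ∧ i + 1 + 1 ≤ p) = 0 :=
    Multiset.filter_eq_nil.2 fun p _ => by omega
  rw [hor, hand, add_zero] at hsplit
  rw [colLen, colLen, ← hsplit, Multiset.card_add, Multiset.count, Multiset.countP_eq_card_filter]
  omega

theorem eq_of_colLen_eq {ν : Nat.Partition n} (h : ∀ j, colLen μ j = colLen ν j) : μ = ν := by
  refine Nat.Partition.ext <| Multiset.ext.2 fun
    | 0 => by
      rw [Multiset.count_eq_zero_of_notMem fun h => (μ.parts_pos h).false,
        Multiset.count_eq_zero_of_notMem fun h => (ν.parts_pos h).false]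
    | i + 1 => by rw [count_parts_succ, count_parts_succ, h, h]

end YoungDiagram

namespace Nat.Partition

variable {n : ℕ} (μ : Nat.Partition n)

def conj : Nat.Partition n :=
  ofSums n ((range n).val.map (colLen μ)) ((sum_eq_multiset_sum _ _).symm.trans (sum_colLen μ))

theorem colLen_conj (i : ℕ) : colLen μ.conj i = rowLen μ i := by
  rw [colLen, conj, ofSums_parts, Multiset.filter_filter, Multiset.filter_map,
    Multiset.card_map, rowLen, card_def, filter_val]
  exact congrArg _ <| Multiset.filter_congr fun j _ => by simp only [Function.comp_apply]; omega

theorem rowLen_conj (i : ℕ) : rowLen μ.conj i = colLen μ i := by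
  have : (range n).filter (fun j => i < colLen μ.conj j) = range (colLen μ i) := by
    ext j
    simp only [mem_filter, mem_range, colLen_conj, lt_rowLen_iff_lt_colLen]
    have := colLen_le μ i
    omega
  rw [rowLen, this, card_range]

theorem conj_conj : μ.conj.conj = μ :=
  eq_of_colLen_eq _ fun j => by rw [colLen_conj, rowLen_conj]

theorem count_conj_succ (i : ℕ) :
    μ.conj.parts.count (i + 1) = rowLen μ i - rowLen μ (i + 1) := by
  rw [count_parts_succ, colLen_conj, colLen_conj]

end Nat.Partition

section TrivialLegHooks

variable {n : ℕ} (μ : Nat.Partition n)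

theorem mem_cells_and_legLen_eq_zero_iff {i j : ℕ} :
    (i, j) ∈ cells μ ∧ legLen μ (i, j) = 0 ↔ rowLen μ (i + 1) ≤ j ∧ j < rowLen μ i := by
  have hj := lt_rowLen_iff_lt_colLen μ (i := i) (j := j)
  have hj' := lt_rowLen_iff_lt_colLen μ (i := i + 1) (j := j)
  have := rowLen_le μ i
  have := colLen_le μ j
  simp only [cells, legLen, mem_filter, mem_product, mem_range]
  omega

theorem hookLen_of_legLen_eq_zero {c : ℕ × ℕ} (hc : c ∈ cells μ) (h : legLen μ c = 0) :
    hookLen μ c = rowLen μ c.1 - c.2 := by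
  have := (lt_rowLen_iff_lt_colLen μ).2 (mem_filter.1 hc).2
  rw [hookLen, armLen, h]
  omega

theorem prod_map_hooksDia {M : Type*} [CommMonoid M] (f : ℕ → M) :
    ((hooksDia μ).map f).prod =
      ∏ i ∈ range n, ∏ t ∈ range (rowLen μ i - rowLen μ (i + 1)), f (t + 1) := by
  rw [hooksDia, Multiset.map_map, ← prod_eq_multiset_prod]
  refine (prod_congr rfl fun c hc => congrArg f <|
    hookLen_of_legLen_eq_zero μ (mem_filter.1 hc).1 (mem_filter.1 hc).2).trans ?_
  rw [prod_finset_product _ (range n) fun i => Ico (rowLen μ (i + 1)) (rowLen μ i)]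
  · exact prod_congr rfl fun i _ => prod_Ico_apply_sub _ _ _
  · rintro ⟨i, j⟩
    rw [mem_filter, mem_cells_and_legLen_eq_zero_iff, mem_range, mem_Ico]
    exact ⟨fun h => ⟨((lt_rowLen_iff_lt_colLen μ).1 h.2).trans_le (colLen_le μ j), h⟩, And.right⟩

end TrivialLegHooks

section Partitions

variable {n : ℕ} (μ : Nat.Partition n) (z : ℂ)

theorem prod_hooksDia_eq_prod_cbinom_count_conj :
    ((hooksDia μ).map (fun h => ((h : ℂ) + z) / (h : ℂ))).prod =
      ∏ j ∈ Icc 1 n, cbinom ((μ.conj.parts.count j : ℂ) + z) (μ.conj.parts.count j) := by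
  -- the statement maps over `hooksDia μ` lifted to `Multiset ℂ` by the monadic coercion
  rw [bind_pure_comp, Multiset.fmap_def, Multiset.map_map, prod_map_hooksDia,
    prod_Icc_one_eq_prod_range]
  exact prod_congr rfl fun i _ => by
    rw [Nat.Partition.count_conj_succ, cbinom_natCast_add_self]
    rfl

theorem prod_cbinom_count_add_eq_neg_one_pow_mul :
    ∏ j ∈ Icc 1 n, cbinom ((μ.parts.count j : ℂ) + z) (μ.parts.count j) =
      (-1) ^ μ.parts.card * ∏ j ∈ Icc 1 n, cbinom (-z - 1) (μ.parts.count j) := by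
  have hparts : ∀ p ∈ μ.parts, p ∈ Icc 1 n := fun p hp =>
    mem_Icc.2 ⟨μ.parts_pos hp, Nat.Partition.le_of_mem_parts hp⟩
  simp_rw [cbinom_natCast_add_self_eq_neg_one_pow_mul]
  rw [prod_mul_distrib, prod_pow_eq_pow_sum, Multiset.sum_count_eq_card hparts]

end Partitions

theorem hook_trivial_leg_eq_binomials_general (n : ℕ) (z : ℂ) :
    (∑ μ : Nat.Partition n,
        ((hooksDia μ).map (fun h => ((h : ℂ) + z) / (h : ℂ))).prod
      = ∑ μ : Nat.Partition n,
          ∏ j ∈ Finset.Icc 1 n,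
            cbinom ((μ.parts.count j : ℂ) + z) (μ.parts.count j)) ∧
    (∑ μ : Nat.Partition n,
        ∏ j ∈ Finset.Icc 1 n, cbinom ((μ.parts.count j : ℂ) + z) (μ.parts.count j)
      = ∑ μ : Nat.Partition n,
          (-1) ^ (μ.parts.card) *
            ∏ j ∈ Finset.Icc 1 n, cbinom (-z - 1) (μ.parts.count j)) := by
  refine ⟨?_, sum_congr rfl fun μ _ => prod_cbinom_count_add_eq_neg_one_pow_mul μ z⟩
  simp_rw [prod_hooksDia_eq_prod_cbinom_count_conj]
  exact Equiv.sum_comp (Function.Involutive.toPerm _ Nat.Partition.conj_conj)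
    fun ν : Nat.Partition n => ∏ j ∈ Icc 1 n, cbinom ((ν.parts.count j : ℂ) + z) (ν.parts.count j)

/-- For every positive integer `n` and every complex `z`,
`∑_{λ⊢n} ∏_{h ∈ H(λ)^⋄} (h+z)/h = ∑_{λ⊢n} ∏_{j=1}^n C(k_j(λ)+z, k_j(λ))
  = ∑_{λ⊢n} (-1)^{ℓ(λ)} ∏_{j=1}^n C(-z-1, k_j(λ))`,
where `k_j(λ)` is the number of parts of `λ` equal to `j` and `ℓ(λ)` is the
number of parts of `λ`. -/
theorem hook_trivial_leg_eq_binomials (n : ℕ) (hn : 1 ≤ n) (z : ℂ) :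
    (∑ μ : Nat.Partition n,
        ((hooksDia μ).map (fun h => ((h : ℂ) + z) / (h : ℂ))).prod
      = ∑ μ : Nat.Partition n,
          ∏ j ∈ Finset.Icc 1 n,
            cbinom ((μ.parts.count j : ℂ) + z) (μ.parts.count j)) ∧
    (∑ μ : Nat.Partition n,
        ∏ j ∈ Finset.Icc 1 n, cbinom ((μ.parts.count j : ℂ) + z) (μ.parts.count j)
      = ∑ μ : Nat.Partition n,
          (-1) ^ (μ.parts.card) *
            ∏ j ∈ Finset.Icc 1 n, cbinom (-z - 1) (μ.parts.count j)) :=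
  hook_trivial_leg_eq_binomials_general n z
end

section
/- The polynomial R(x) = x^8 + 134x^7 + 6496x^6 + 147854x^5 + 1709659x^4 + 10035116x^3 + 28014804x^2 + 29758896x + 6531840 has at least one real root in each of the six open intervals (−59,−58), (−33,−32), (−18,−17), (−14,−13), (−2,−1), and (−1,0), and R has no real roots outside the union of these six intervals. -/
open Finset Polynomial

/-- The degree-8 factor `R(x)` in the factorization `P₁₀(x) = (x/10!)(x+1)R(x)`
of the 10th D'Arcais polynomial. -/
noncomputable def Rpoly : Polynomial ℝ :=
  X ^ 8 + C 134 * X ^ 7 + C 6496 * X ^ 6 + C 147854 * X ^ 5 + C 1709659 * X ^ 4 +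
    C 10035116 * X ^ 3 + C 28014804 * X ^ 2 + C 29758896 * X + C 6531840

lemma Reval (x : ℝ) : Rpoly.eval x =
    x ^ 8 + 134 * x ^ 7 + 6496 * x ^ 6 + 147854 * x ^ 5 + 1709659 * x ^ 4 +
    10035116 * x ^ 3 + 28014804 * x ^ 2 + 29758896 * x + 6531840 := by
  simp [Rpoly]

lemma Rcont : ContinuousOn (fun x : ℝ => Rpoly.eval x) (Set.univ) :=
  (Rpoly.continuous_aeval).continuousOn

lemma exRoot_pn {a b : ℝ} (hab : a ≤ b) (h1 : 0 < Rpoly.eval a) (h2 : Rpoly.eval b < 0) :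
    ∃ x ∈ Set.Ioo a b, Rpoly.eval x = 0 := by
  have := intermediate_value_Ioo' hab ((Rpoly.continuous_aeval).continuousOn (s := Set.Icc a b))
  have h0 : (0:ℝ) ∈ Set.Ioo (Polynomial.aeval b Rpoly) (Polynomial.aeval a Rpoly) := by
    simp only [Polynomial.aeval_def, Polynomial.eval₂_eq_eval_map, Polynomial.map_id] at *
    constructor <;> simpa using (by assumption)
  obtain ⟨x, hx, hx0⟩ := this h0
  exact ⟨x, hx, by simpa [Polynomial.aeval_def, Polynomial.eval₂_eq_eval_map] using hx0⟩

lemma exRoot_np {a b : ℝ} (hab : a ≤ b) (h1 : Rpoly.eval a < 0) (h2 : 0 < Rpoly.eval b) :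
    ∃ x ∈ Set.Ioo a b, Rpoly.eval x = 0 := by
  have := intermediate_value_Ioo hab ((Rpoly.continuous_aeval).continuousOn (s := Set.Icc a b))
  have h0 : (0:ℝ) ∈ Set.Ioo (Polynomial.aeval a Rpoly) (Polynomial.aeval b Rpoly) := by
    simp only [Polynomial.aeval_def, Polynomial.eval₂_eq_eval_map, Polynomial.map_id] at *
    constructor <;> simpa using (by assumption)
  obtain ⟨x, hx, hx0⟩ := this h0
  exact ⟨x, hx, by simpa [Polynomial.aeval_def, Polynomial.eval₂_eq_eval_map] using hx0⟩

lemma sign_low {x : ℝ} (hx : x ≤ -59) : 0 < Rpoly.eval x := by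
  rw [Reval]
  have ht : (0:ℝ) ≤ -59 - x := by linarith
  nlinarith [pow_nonneg ht 8, pow_nonneg ht 7, pow_nonneg ht 6, pow_nonneg ht 5,
    pow_nonneg ht 4, pow_nonneg ht 3, pow_nonneg ht 2, ht]

lemma sign_high {x : ℝ} (hx : (0:ℝ) ≤ x) : 0 < Rpoly.eval x := by
  rw [Reval]
  nlinarith [pow_nonneg hx 8, pow_nonneg hx 7, pow_nonneg hx 6, pow_nonneg hx 5,
    pow_nonneg hx 4, pow_nonneg hx 3, pow_nonneg hx 2, hx]

lemma sign_0 {x : ℝ} (h1 : (-58:ℝ) ≤ x) (h2 : x ≤ -33) : Rpoly.eval x < 0 := by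
  rw [Reval]
  have hu : (0:ℝ) ≤ x - -58 := by linarith
  have hv : (0:ℝ) ≤ -33 - x := by linarith
  nlinarith [mul_nonneg (pow_nonneg hu 0) (pow_nonneg hv 8), mul_nonneg (pow_nonneg hu 1) (pow_nonneg hv 7), mul_nonneg (pow_nonneg hu 2) (pow_nonneg hv 6), mul_nonneg (pow_nonneg hu 3) (pow_nonneg hv 5), mul_nonneg (pow_nonneg hu 4) (pow_nonneg hv 4), mul_nonneg (pow_nonneg hu 5) (pow_nonneg hv 3), mul_nonneg (pow_nonneg hu 6) (pow_nonneg hv 2), mul_nonneg (pow_nonneg hu 7) (pow_nonneg hv 1), mul_nonneg (pow_nonneg hu 8) (pow_nonneg hv 0)]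

lemma sign_1 {x : ℝ} (h1 : (-32:ℝ) ≤ x) (h2 : x ≤ -18) : 0 < Rpoly.eval x := by
  rw [Reval]
  have hu : (0:ℝ) ≤ x - -32 := by linarith
  have hv : (0:ℝ) ≤ -18 - x := by linarith
  nlinarith [mul_nonneg (pow_nonneg hu 0) (pow_nonneg hv 8), mul_nonneg (pow_nonneg hu 1) (pow_nonneg hv 7), mul_nonneg (pow_nonneg hu 2) (pow_nonneg hv 6), mul_nonneg (pow_nonneg hu 3) (pow_nonneg hv 5), mul_nonneg (pow_nonneg hu 4) (pow_nonneg hv 4), mul_nonneg (pow_nonneg hu 5) (pow_nonneg hv 3), mul_nonneg (pow_nonneg hu 6) (pow_nonneg hv 2), mul_nonneg (pow_nonneg hu 7) (pow_nonneg hv 1), mul_nonneg (pow_nonneg hu 8) (pow_nonneg hv 0)]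

lemma sign_2 {x : ℝ} (h1 : (-17:ℝ) ≤ x) (h2 : x ≤ -14) : Rpoly.eval x < 0 := by
  rw [Reval]
  have hu : (0:ℝ) ≤ x - -17 := by linarith
  have hv : (0:ℝ) ≤ -14 - x := by linarith
  nlinarith [mul_nonneg (pow_nonneg hu 0) (pow_nonneg hv 8), mul_nonneg (pow_nonneg hu 1) (pow_nonneg hv 7), mul_nonneg (pow_nonneg hu 2) (pow_nonneg hv 6), mul_nonneg (pow_nonneg hu 3) (pow_nonneg hv 5), mul_nonneg (pow_nonneg hu 4) (pow_nonneg hv 4), mul_nonneg (pow_nonneg hu 5) (pow_nonneg hv 3), mul_nonneg (pow_nonneg hu 6) (pow_nonneg hv 2), mul_nonneg (pow_nonneg hu 7) (pow_nonneg hv 1), mul_nonneg (pow_nonneg hu 8) (pow_nonneg hv 0)]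

lemma sign_3 {x : ℝ} (h1 : (-13:ℝ) ≤ x) (h2 : x ≤ -9) : 0 < Rpoly.eval x := by
  rw [Reval]
  have hu : (0:ℝ) ≤ x - -13 := by linarith
  have hv : (0:ℝ) ≤ -9 - x := by linarith
  nlinarith [mul_nonneg (pow_nonneg hu 0) (pow_nonneg hv 8), mul_nonneg (pow_nonneg hu 1) (pow_nonneg hv 7), mul_nonneg (pow_nonneg hu 2) (pow_nonneg hv 6), mul_nonneg (pow_nonneg hu 3) (pow_nonneg hv 5), mul_nonneg (pow_nonneg hu 4) (pow_nonneg hv 4), mul_nonneg (pow_nonneg hu 5) (pow_nonneg hv 3), mul_nonneg (pow_nonneg hu 6) (pow_nonneg hv 2), mul_nonneg (pow_nonneg hu 7) (pow_nonneg hv 1), mul_nonneg (pow_nonneg hu 8) (pow_nonneg hv 0)]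

lemma sign_4 {x : ℝ} (h1 : (-9:ℝ) ≤ x) (h2 : x ≤ -5) : 0 < Rpoly.eval x := by
  rw [Reval]
  have hu : (0:ℝ) ≤ x - -9 := by linarith
  have hv : (0:ℝ) ≤ -5 - x := by linarith
  nlinarith [mul_nonneg (pow_nonneg hu 0) (pow_nonneg hv 8), mul_nonneg (pow_nonneg hu 1) (pow_nonneg hv 7), mul_nonneg (pow_nonneg hu 2) (pow_nonneg hv 6), mul_nonneg (pow_nonneg hu 3) (pow_nonneg hv 5), mul_nonneg (pow_nonneg hu 4) (pow_nonneg hv 4), mul_nonneg (pow_nonneg hu 5) (pow_nonneg hv 3), mul_nonneg (pow_nonneg hu 6) (pow_nonneg hv 2), mul_nonneg (pow_nonneg hu 7) (pow_nonneg hv 1), mul_nonneg (pow_nonneg hu 8) (pow_nonneg hv 0)]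

lemma sign_5 {x : ℝ} (h1 : (-5:ℝ) ≤ x) (h2 : x ≤ -2) : 0 < Rpoly.eval x := by
  rw [Reval]
  have hu : (0:ℝ) ≤ x - -5 := by linarith
  have hv : (0:ℝ) ≤ -2 - x := by linarith
  nlinarith [mul_nonneg (pow_nonneg hu 0) (pow_nonneg hv 8), mul_nonneg (pow_nonneg hu 1) (pow_nonneg hv 7), mul_nonneg (pow_nonneg hu 2) (pow_nonneg hv 6), mul_nonneg (pow_nonneg hu 3) (pow_nonneg hv 5), mul_nonneg (pow_nonneg hu 4) (pow_nonneg hv 4), mul_nonneg (pow_nonneg hu 5) (pow_nonneg hv 3), mul_nonneg (pow_nonneg hu 6) (pow_nonneg hv 2), mul_nonneg (pow_nonneg hu 7) (pow_nonneg hv 1), mul_nonneg (pow_nonneg hu 8) (pow_nonneg hv 0)]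

/-- `R(x)` has at least one real root in each of the six open intervals
`(-59,-58)`, `(-33,-32)`, `(-18,-17)`, `(-14,-13)`, `(-2,-1)`, `(-1,0)`,
and no real roots outside the union of these intervals. -/
theorem Rpoly_root_localization :
    (∃ x ∈ Set.Ioo (-59 : ℝ) (-58), Rpoly.eval x = 0) ∧
    (∃ x ∈ Set.Ioo (-33 : ℝ) (-32), Rpoly.eval x = 0) ∧
    (∃ x ∈ Set.Ioo (-18 : ℝ) (-17), Rpoly.eval x = 0) ∧
    (∃ x ∈ Set.Ioo (-14 : ℝ) (-13), Rpoly.eval x = 0) ∧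
    (∃ x ∈ Set.Ioo (-2 : ℝ) (-1), Rpoly.eval x = 0) ∧
    (∃ x ∈ Set.Ioo (-1 : ℝ) 0, Rpoly.eval x = 0) ∧
    (∀ x : ℝ, Rpoly.eval x = 0 →
      x ∈ Set.Ioo (-59 : ℝ) (-58) ∪ Set.Ioo (-33 : ℝ) (-32) ∪ Set.Ioo (-18 : ℝ) (-17) ∪
        Set.Ioo (-14 : ℝ) (-13) ∪ Set.Ioo (-2 : ℝ) (-1) ∪ Set.Ioo (-1 : ℝ) 0) := by
  have e59 : Rpoly.eval (-59) = 402791356800 := by rw [Reval]; norm_num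
  have e58 : Rpoly.eval (-58) = -75643545600 := by rw [Reval]; norm_num
  have e33 : Rpoly.eval (-33) = -4990053600 := by rw [Reval]; norm_num
  have e32 : Rpoly.eval (-32) = 794707200 := by rw [Reval]; norm_num
  have e18 : Rpoly.eval (-18) = 41731200 := by rw [Reval]; norm_num
  have e17 : Rpoly.eval (-17) = -56700000 := by rw [Reval]; norm_num
  have e14 : Rpoly.eval (-14) = -34473600 := by rw [Reval]; norm_num
  have e13 : Rpoly.eval (-13) = 1814400 := by rw [Reval]; norm_num
  have e2 : Rpoly.eval (-2) = 1814400 := by rw [Reval]; norm_num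
  have e1 : Rpoly.eval (-1) = -3679200 := by rw [Reval]; norm_num
  have e0 : Rpoly.eval 0 = 6531840 := by rw [Reval]; norm_num
  refine ⟨exRoot_pn (by norm_num) (by rw [e59]; norm_num) (by rw [e58]; norm_num),
    exRoot_np (by norm_num) (by rw [e33]; norm_num) (by rw [e32]; norm_num),
    exRoot_pn (by norm_num) (by rw [e18]; norm_num) (by rw [e17]; norm_num),
    exRoot_np (by norm_num) (by rw [e14]; norm_num) (by rw [e13]; norm_num),
    exRoot_pn (by norm_num) (by rw [e2]; norm_num) (by rw [e1]; norm_num),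
    exRoot_np (by norm_num) (by rw [e1]; norm_num) (by rw [e0]; norm_num), ?_⟩
  intro x hx
  simp only [Set.mem_union, Set.mem_Ioo]
  rcases le_or_gt x (-59) with h | h
  · exact absurd hx (by have := sign_low h; linarith)
  rcases lt_or_ge x (-58) with h' | h'
  · tauto
  rcases le_or_gt x (-33) with h2 | h2
  · exact absurd hx (by have := sign_0 h' h2; linarith)
  rcases lt_or_ge x (-32) with h' | h'
  · tauto
  rcases le_or_gt x (-18) with h3 | h3
  · exact absurd hx (by have := sign_1 h' h3; linarith)
  rcases lt_or_ge x (-17) with h' | h'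
  · tauto
  rcases le_or_gt x (-14) with h4 | h4
  · exact absurd hx (by have := sign_2 h' h4; linarith)
  rcases lt_or_ge x (-13) with h' | h'
  · tauto
  rcases le_or_gt x (-9) with h5 | h5
  · exact absurd hx (by have := sign_3 h' h5; linarith)
  rcases le_or_gt x (-5) with h6 | h6
  · exact absurd hx (by have := sign_4 (le_of_lt h5) h6; linarith)
  rcases le_or_gt x (-2) with h7 | h7
  · exact absurd hx (by have := sign_5 (le_of_lt h6) h7; linarith)
  rcases lt_or_ge x (-1) with h' | h'
  · tauto
  rcases eq_or_lt_of_le h' with h'' | h''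
  · exact absurd hx (by subst h''; rw [e1]; norm_num)
  rcases lt_or_ge x 0 with h8 | h8
  · tauto
  · exact absurd hx (by have := sign_high h8; linarith)
end
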